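/- arXiv:1903.12004 — 3 statements merged into one kernel-verified Lean document; each statement's English description precedes it below -/
import Mathlib

section
/- Let f:(0,∞)→(0,∞) be decreasing, satisfy the doubling property f(r) ≤ C f(2r) for all r>0, and be integrable at infinity: ∫_{|y|>1} f(|y|) dy < ∞ over ℝ^d. Then f has the direct jump property: there exists C₃>0 such that ∫_{|x−y|>1, |y|>1} f(|x−y|) f(|y|) dy ≤ C₃ f(|x|) for all |x| ≥ 1. -/
open MeasureTheory Real Set Filter

set_option maxHeartbeats 1000000 in
/-- doubling profiles which are integrable at infinity have the
direct jump property. -/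
theorem stmt_2 {d : ℕ} (f : ℝ → ℝ) (C : ℝ)
    (hf_pos : ∀ r : ℝ, 0 < r → 0 < f r)
    (hf_dec : ∀ r s : ℝ, 0 < r → r ≤ s → f s ≤ f r)
    (hdbl : ∀ r : ℝ, 0 < r → f r ≤ C * f (2 * r))
    (hf_int : IntegrableOn (fun y : EuclideanSpace ℝ (Fin d) => f ‖y‖)
      {y : EuclideanSpace ℝ (Fin d) | 1 < ‖y‖}) :
    ∃ C₃ > (0:ℝ), ∀ x : EuclideanSpace ℝ (Fin d), 1 ≤ ‖x‖ →
      (∫ y in {y : EuclideanSpace ℝ (Fin d) | 1 < ‖x - y‖ ∧ 1 < ‖y‖},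
        f ‖x - y‖ * f ‖y‖) ≤ C₃ * f ‖x‖ := by
  -- C is positive
  have hC : 0 < C := by
    have h1 : (0:ℝ) < f 1 := hf_pos 1 one_pos
    have h2 : f 1 ≤ C * f (2 * 1) := hdbl 1 one_pos
    have h3 : (0:ℝ) < f (2 * 1) := hf_pos _ (by norm_num)
    nlinarith
  -- measurable globally-defined version of f
  set F : ℝ → ℝ := fun r => f (max r 1) with hF
  have hF_anti : Antitone F := fun r s hrs =>
    hf_dec (max r 1) (max s 1) (lt_of_lt_of_le one_pos (le_max_right _ _))
      (max_le_max hrs le_rfl)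
  have hF_meas : Measurable F := hF_anti.measurable
  have hF_eq : ∀ r : ℝ, 1 < r → F r = f r := fun r hr => by
    simp [hF, max_eq_left hr.le]
  have hF_pos : ∀ r : ℝ, 0 < F r := fun r =>
    hf_pos _ (lt_of_lt_of_le one_pos (le_max_right _ _))
  set I : ℝ := ∫ y in {y : EuclideanSpace ℝ (Fin d) | 1 < ‖y‖}, f ‖y‖ with hI
  have hSball : MeasurableSet {y : EuclideanSpace ℝ (Fin d) | 1 < ‖y‖} :=
    measurableSet_lt measurable_const continuous_norm.measurable
  have hI_nonneg : 0 ≤ I := by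
    apply setIntegral_nonneg hSball
    intro y hy
    exact (hf_pos _ (lt_trans one_pos hy)).le
  refine ⟨2 * C * I + 1, by positivity, ?_⟩
  intro x hx
  have hfx : 0 < f ‖x‖ := hf_pos _ (lt_of_lt_of_le one_pos hx)
  set a : ℝ := ‖x‖ / 2 with ha
  have ha_pos : 0 < a := by positivity
  have hfa : f a ≤ C * f ‖x‖ := by
    have := hdbl a ha_pos
    have h2a : 2 * a = ‖x‖ := by rw [ha]; ring
    rwa [h2a] at this
  -- the sets
  set S : Set (EuclideanSpace ℝ (Fin d)) := {y | 1 < ‖x - y‖ ∧ 1 < ‖y‖} with hS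
  have hxy_meas : Measurable fun y : EuclideanSpace ℝ (Fin d) => ‖x - y‖ :=
    ((continuous_const.sub continuous_id).norm).measurable
  have hS_meas : MeasurableSet S :=
    (measurableSet_lt measurable_const hxy_meas).inter
      (measurableSet_lt measurable_const continuous_norm.measurable)
  set S₁ : Set (EuclideanSpace ℝ (Fin d)) := S ∩ {y | a ≤ ‖x - y‖} with hS₁
  set S₂ : Set (EuclideanSpace ℝ (Fin d)) := S ∩ {y | ‖x - y‖ < a} with hS₂
  have hS₁_meas : MeasurableSet S₁ :=
    hS_meas.inter (measurableSet_le measurable_const hxy_meas)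
  have hS₂_meas : MeasurableSet S₂ :=
    hS_meas.inter (measurableSet_lt hxy_meas measurable_const)
  have hS_union : S₁ ∪ S₂ = S := by
    ext y
    constructor
    · rintro (⟨h, _⟩ | ⟨h, _⟩) <;> exact h
    · intro h
      rcases le_or_gt a ‖x - y‖ with h' | h'
      · exact Or.inl ⟨h, h'⟩
      · exact Or.inr ⟨h, h'⟩
  have hS_disj : Disjoint S₁ S₂ := by
    rw [Set.disjoint_left]
    rintro y ⟨_, h₁⟩ ⟨_, h₂⟩
    exact absurd (lt_of_le_of_lt h₁ h₂) (lt_irrefl a)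
  -- translation invariance
  have he_mp : MeasurePreserving (fun y : EuclideanSpace ℝ (Fin d) => x - y)
      volume volume := Measure.measurePreserving_sub_left volume x
  have he_emb : MeasurableEmbedding (fun y : EuclideanSpace ℝ (Fin d) => x - y) :=
    (MeasurableEquiv.subLeft x).measurableEmbedding
  have hpre : {y : EuclideanSpace ℝ (Fin d) | 1 < ‖x - y‖} =
      (fun y : EuclideanSpace ℝ (Fin d) => x - y) ⁻¹'
        {y : EuclideanSpace ℝ (Fin d) | 1 < ‖y‖} := rfl
  have intJ : IntegrableOn (fun y : EuclideanSpace ℝ (Fin d) => f ‖x - y‖)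
      {y : EuclideanSpace ℝ (Fin d) | 1 < ‖x - y‖} := by
    rw [hpre]
    exact (he_mp.integrableOn_comp_preimage he_emb
      (f := fun z : EuclideanSpace ℝ (Fin d) => f ‖z‖)
      (s := {y : EuclideanSpace ℝ (Fin d) | 1 < ‖y‖})).mpr hf_int
  have hJ_eq : (∫ y in {y : EuclideanSpace ℝ (Fin d) | 1 < ‖x - y‖}, f ‖x - y‖) = I := by
    rw [hpre, hI]
    exact he_mp.setIntegral_preimage_emb he_emb
      (fun z : EuclideanSpace ℝ (Fin d) => f ‖z‖)
      {y : EuclideanSpace ℝ (Fin d) | 1 < ‖y‖}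
  -- the measurable version G of the integrand
  set G : EuclideanSpace ℝ (Fin d) → ℝ := fun y => F ‖x - y‖ * F ‖y‖ with hG
  have hG_meas : Measurable G :=
    (hF_meas.comp hxy_meas).mul (hF_meas.comp continuous_norm.measurable)
  have hG_eqS : ∀ y ∈ S, G y = f ‖x - y‖ * f ‖y‖ := by
    rintro y ⟨h₁, h₂⟩
    rw [hG]
    simp only
    rw [hF_eq _ h₁, hF_eq _ h₂]
  -- pointwise bounds
  have hbound₁ : ∀ y ∈ S₁, G y ≤ C * f ‖x‖ * f ‖y‖ := by
    rintro y ⟨⟨h₁, h₂⟩, h₃⟩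
    rw [hG_eqS y ⟨h₁, h₂⟩]
    have : f ‖x - y‖ ≤ f a := hf_dec a _ ha_pos h₃
    have hfy : 0 ≤ f ‖y‖ := (hf_pos _ (lt_trans one_pos h₂)).le
    nlinarith [le_trans this hfa]
  have hbound₂ : ∀ y ∈ S₂, G y ≤ C * f ‖x‖ * f ‖x - y‖ := by
    rintro y ⟨⟨h₁, h₂⟩, h₃⟩
    rw [hG_eqS y ⟨h₁, h₂⟩]
    have h₃' : ‖x - y‖ < a := h₃
    have hya : a ≤ ‖y‖ := by
      have htri : ‖x‖ ≤ ‖x - y‖ + ‖y‖ := by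
        calc ‖x‖ = ‖(x - y) + y‖ := by rw [sub_add_cancel]
        _ ≤ ‖x - y‖ + ‖y‖ := norm_add_le _ _
      have hxa : ‖x‖ - a = a := by rw [ha]; ring
      linarith
    have : f ‖y‖ ≤ f a := hf_dec a _ ha_pos hya
    have hfxy : 0 ≤ f ‖x - y‖ := (hf_pos _ (lt_trans one_pos h₁)).le
    nlinarith [le_trans this hfa]
  have hG_nonneg : ∀ y, 0 ≤ G y := fun y => (mul_pos (hF_pos _) (hF_pos _)).le
  -- integrability of G on each piece
  have hS₁_sub : S₁ ⊆ {y : EuclideanSpace ℝ (Fin d) | 1 < ‖y‖} :=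
    fun y hy => hy.1.2
  have hS₂_sub : S₂ ⊆ {y : EuclideanSpace ℝ (Fin d) | 1 < ‖x - y‖} :=
    fun y hy => hy.1.1
  have intG₁ : IntegrableOn G S₁ := by
    apply Integrable.mono' (((hf_int.mono_set hS₁_sub)).const_mul (C * f ‖x‖))
      (hG_meas.aestronglyMeasurable.restrict)
    filter_upwards [ae_restrict_mem hS₁_meas] with y hy
    rw [Real.norm_eq_abs, abs_of_nonneg (hG_nonneg y)]
    exact hbound₁ y hy
  have intG₂ : IntegrableOn G S₂ := by
    apply Integrable.mono' (((intJ.mono_set hS₂_sub)).const_mul (C * f ‖x‖))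
      (hG_meas.aestronglyMeasurable.restrict)
    filter_upwards [ae_restrict_mem hS₂_meas] with y hy
    rw [Real.norm_eq_abs, abs_of_nonneg (hG_nonneg y)]
    exact hbound₂ y hy
  -- bound the integral of G on S₁
  have hint₁ : (∫ y in S₁, G y) ≤ C * f ‖x‖ * I := by
    calc (∫ y in S₁, G y) ≤ ∫ y in S₁, C * f ‖x‖ * f ‖y‖ := by
          apply setIntegral_mono_on intG₁ ((hf_int.mono_set hS₁_sub).const_mul _)
            hS₁_meas hbound₁
    _ = C * f ‖x‖ * ∫ y in S₁, f ‖y‖ := integral_const_mul _ _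
    _ ≤ C * f ‖x‖ * I := by
          apply mul_le_mul_of_nonneg_left _ (by positivity)
          apply setIntegral_mono_set hf_int
          · filter_upwards [ae_restrict_mem hSball] with y hy
            exact (hf_pos _ (lt_trans one_pos hy)).le
          · exact HasSubset.Subset.eventuallyLE hS₁_sub
  have hint₂ : (∫ y in S₂, G y) ≤ C * f ‖x‖ * I := by
    calc (∫ y in S₂, G y) ≤ ∫ y in S₂, C * f ‖x‖ * f ‖x - y‖ := by
          apply setIntegral_mono_on intG₂ ((intJ.mono_set hS₂_sub).const_mul _)
            hS₂_meas hbound₂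
    _ = C * f ‖x‖ * ∫ y in S₂, f ‖x - y‖ := integral_const_mul _ _
    _ ≤ C * f ‖x‖ * I := by
          apply mul_le_mul_of_nonneg_left _ (by positivity)
          rw [← hJ_eq]
          apply setIntegral_mono_set intJ
          · filter_upwards [ae_restrict_mem
              (measurableSet_lt measurable_const hxy_meas)] with y hy
            exact (hf_pos _ (lt_trans one_pos hy)).le
          · exact HasSubset.Subset.eventuallyLE hS₂_sub
  -- put it together
  have hsplit : (∫ y in S, G y) = (∫ y in S₁, G y) + ∫ y in S₂, G y := by
    rw [← hS_union]
    exact setIntegral_union hS_disj hS₂_meas intG₁ intG₂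
  have hcongr : (∫ y in S, f ‖x - y‖ * f ‖y‖) = ∫ y in S, G y :=
    (setIntegral_congr_fun hS_meas (fun y hy => (hG_eqS y hy).symm))
  calc (∫ y in S, f ‖x - y‖ * f ‖y‖) = ∫ y in S, G y := hcongr
  _ = (∫ y in S₁, G y) + ∫ y in S₂, G y := hsplit
  _ ≤ C * f ‖x‖ * I + C * f ‖x‖ * I := add_le_add hint₁ hint₂
  _ = 2 * C * I * f ‖x‖ := by ring
  _ ≤ (2 * C * I + 1) * f ‖x‖ := by nlinarith
end

section
/- Let f(r) = e^{−mr} h(r) for some m>0, where h:(0,∞)→(0,∞) is decreasing, has the doubling property h(r) ≤ C h(2r) for all r>0, and satisfies ∫_{|y|>1} h(|y|) dy < ∞ over ℝ^d. Then f satisfies the direct jump property: there exists C₃>0 such that ∫_{|x−y|>1, |y|>1} f(|x−y|) f(|y|) dy ≤ C₃ f(|x|) for all |x| ≥ 1. -/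
set_option maxHeartbeats 1000000


open MeasureTheory Real Set Filter

/-- tempered profiles `f(r) = e^{-mr} h(r)` with `h` decreasing,
doubling and integrable at infinity have the direct jump property. -/
theorem stmt_3 {d : ℕ} (h : ℝ → ℝ) (m C : ℝ) (hm : 0 < m)
    (hh_pos : ∀ r : ℝ, 0 < r → 0 < h r)
    (hh_dec : ∀ r s : ℝ, 0 < r → r ≤ s → h s ≤ h r)
    (hdbl : ∀ r : ℝ, 0 < r → h r ≤ C * h (2 * r))
    (hh_int : IntegrableOn (fun y : EuclideanSpace ℝ (Fin d) => h ‖y‖)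
      {y : EuclideanSpace ℝ (Fin d) | 1 < ‖y‖}) :
    ∃ C₃ > (0:ℝ), ∀ x : EuclideanSpace ℝ (Fin d), 1 ≤ ‖x‖ →
      (∫ y in {y : EuclideanSpace ℝ (Fin d) | 1 < ‖x - y‖ ∧ 1 < ‖y‖},
        (Real.exp (-m * ‖x - y‖) * h ‖x - y‖) * (Real.exp (-m * ‖y‖) * h ‖y‖))
        ≤ C₃ * (Real.exp (-m * ‖x‖) * h ‖x‖) := by
  classical
  set E := EuclideanSpace ℝ (Fin d)
  -- modified profile, defined and well-behaved everywhere
  set ht : ℝ → ℝ := fun r => h (max r 1) with hht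
  have ht_pos : ∀ r, 0 < ht r := fun r =>
    hh_pos _ (lt_of_lt_of_le one_pos (le_max_right _ _))
  have ht_anti : Antitone ht := fun r s hrs =>
    hh_dec _ _ (lt_of_lt_of_le one_pos (le_max_right _ _)) (max_le_max hrs le_rfl)
  have ht_meas : Measurable ht := ht_anti.measurable
  have hC : 0 < C := by
    have h1 := hdbl 1 one_pos
    norm_num at h1
    have h2 := hh_pos 1 one_pos
    have h3 := hh_pos 2 two_pos
    nlinarith
  -- measurable sets
  have hSmeas : MeasurableSet {y : E | 1 < ‖y‖} :=
    measurableSet_lt measurable_const measurable_norm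
  -- integrability of ht over the outer region
  have htint : IntegrableOn (fun y : E => ht ‖y‖) {y : E | 1 < ‖y‖} := by
    refine hh_int.congr_fun (fun y hy => ?_) hSmeas
    simp only [hht]
    rw [max_eq_left (le_of_lt hy)]
  set I : ℝ := ∫ y in {y : E | 1 < ‖y‖}, ht ‖y‖ with hI
  have hI0 : 0 ≤ I :=
    setIntegral_nonneg hSmeas fun y _ => (ht_pos _).le
  refine ⟨2 * C * I + 1, by positivity, fun x hx => ?_⟩
  set S : Set E := {y : E | 1 < ‖x - y‖ ∧ 1 < ‖y‖} with hS
  have hpreMeas : MeasurableSet {y : E | 1 < ‖x - y‖} :=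
    measurableSet_lt measurable_const
      ((measurable_const.sub measurable_id).norm)
  have hSx : MeasurableSet S := hpreMeas.inter hSmeas
  have hxpos : (0:ℝ) < ‖x‖ := lt_of_lt_of_le one_pos hx
  -- integrability of ht ‖x - y‖ over the shifted region, via translation invariance
  have hindfun : (fun y : E => Set.indicator {z : E | 1 < ‖z‖} (fun z => ht ‖z‖) (x - y)) =
      Set.indicator {y : E | 1 < ‖x - y‖} (fun y => ht ‖x - y‖) := by
    funext y
    exact (Set.indicator_comp_right (fun y : E => x - y)
      (s := {z : E | 1 < ‖z‖}) (g := fun z => ht ‖z‖)).symm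
  have hind : Integrable (Set.indicator {z : E | 1 < ‖z‖} (fun z => ht ‖z‖))
      (volume : Measure E) := (integrable_indicator_iff hSmeas).mpr htint
  have hcomp : Integrable
      (fun y : E => Set.indicator {z : E | 1 < ‖z‖} (fun z => ht ‖z‖) (x - y))
      (volume : Measure E) := (integrable_comp_sub_left _ x).mpr hind
  have hint' : IntegrableOn (fun y : E => ht ‖x - y‖) {y : E | 1 < ‖x - y‖} := by
    refine (integrable_indicator_iff hpreMeas).mp ?_
    rwa [hindfun] at hcomp
  have heq : (∫ y in {y : E | 1 < ‖x - y‖}, ht ‖x - y‖) = I := by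
    rw [hI, ← integral_indicator hpreMeas, ← integral_indicator hSmeas, ← hindfun]
    exact integral_sub_left_eq_self _ volume x
  have htint2 : IntegrableOn (fun y : E => ht ‖x - y‖) S :=
    hint'.mono_set fun y hy => hy.1
  have htint1 : IntegrableOn (fun y : E => ht ‖y‖) S :=
    htint.mono_set fun y hy => hy.2
  -- the dominating constant
  set K : ℝ := Real.exp (-m * ‖x‖) * (C * h ‖x‖) with hK
  have hK0 : 0 < K := by
    have := hh_pos _ hxpos
    positivity
  -- pointwise bound on S
  have hbound : ∀ y ∈ S, (Real.exp (-m * ‖x - y‖) * ht ‖x - y‖) *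
      (Real.exp (-m * ‖y‖) * ht ‖y‖) ≤ K * (ht ‖x - y‖ + ht ‖y‖) := by
    intro y hy
    obtain ⟨ha, hb⟩ := hy
    set a := ‖x - y‖
    set b := ‖y‖
    have ha0 : (0:ℝ) < a := lt_trans one_pos ha
    have hb0 : (0:ℝ) < b := lt_trans one_pos hb
    have htri : ‖x‖ ≤ a + b := by
      calc ‖x‖ = ‖(x - y) + y‖ := by rw [sub_add_cancel]
        _ ≤ a + b := norm_add_le _ _
    have hexp : Real.exp (-m * a) * Real.exp (-m * b) ≤ Real.exp (-m * ‖x‖) := by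
      rw [← Real.exp_add]
      apply Real.exp_le_exp.mpr
      nlinarith
    have hdh : ht (‖x‖ / 2) ≤ C * h ‖x‖ := by
      have h1 : ht (‖x‖ / 2) ≤ h (‖x‖ / 2) := by
        simp only [hht]
        exact hh_dec _ _ (by positivity) (le_max_left _ _)
      have h2 : h (‖x‖ / 2) ≤ C * h (2 * (‖x‖ / 2)) := hdbl _ (by positivity)
      rw [show 2 * (‖x‖ / 2) = ‖x‖ by ring] at h2
      linarith
    -- case split
    have hhprod : ht a * ht b ≤ C * h ‖x‖ * (ht a + ht b) := by
      rcases le_or_gt (‖x‖ / 2) a with hca | hca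
      · have h1 : ht a ≤ C * h ‖x‖ := le_trans (ht_anti hca) hdh
        have h2 : 0 ≤ ht a := (ht_pos _).le
        have h3 : 0 < ht b := ht_pos _
        nlinarith
      · have hcb : ‖x‖ / 2 ≤ b := by linarith
        have h1 : ht b ≤ C * h ‖x‖ := le_trans (ht_anti hcb) hdh
        have h2 : 0 ≤ ht b := (ht_pos _).le
        have h3 : 0 < ht a := ht_pos _
        nlinarith
    have hhab : 0 ≤ ht a * ht b := by
      have := ht_pos a; have := ht_pos b; positivity
    calc (Real.exp (-m * a) * ht a) * (Real.exp (-m * b) * ht b)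
        = (Real.exp (-m * a) * Real.exp (-m * b)) * (ht a * ht b) := by ring
      _ ≤ Real.exp (-m * ‖x‖) * (C * h ‖x‖ * (ht a + ht b)) := by
          apply mul_le_mul hexp hhprod hhab (Real.exp_pos _).le
      _ = K * (ht a + ht b) := by rw [hK]; ring
  -- the dominating function is integrable on S
  have hGint : IntegrableOn (fun y : E => K * (ht ‖x - y‖ + ht ‖y‖)) S :=
    ((htint2.add htint1).const_mul K)
  -- the modified integrand is measurable and integrable on S
  have hnx : Measurable fun y : E => ‖x - y‖ := (measurable_const.sub measurable_id).norm
  have hny : Measurable fun y : E => ‖y‖ := measurable_norm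
  have hgmeas : Measurable (fun y : E =>
      (Real.exp (-m * ‖x - y‖) * ht ‖x - y‖) * (Real.exp (-m * ‖y‖) * ht ‖y‖)) :=
    ((Real.measurable_exp.comp (hnx.const_mul (-m))).mul (ht_meas.comp hnx)).mul
      ((Real.measurable_exp.comp (hny.const_mul (-m))).mul (ht_meas.comp hny))
  have hgint : IntegrableOn (fun y : E =>
      (Real.exp (-m * ‖x - y‖) * ht ‖x - y‖) * (Real.exp (-m * ‖y‖) * ht ‖y‖)) S := by
    refine hGint.mono' hgmeas.aestronglyMeasurable.restrict ?_
    refine (ae_restrict_iff' hSx).mpr (Eventually.of_forall fun y hy => ?_)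
    have hnn : (0:ℝ) ≤ (Real.exp (-m * ‖x - y‖) * ht ‖x - y‖) *
        (Real.exp (-m * ‖y‖) * ht ‖y‖) := by
      have := ht_pos ‖x - y‖; have := ht_pos ‖y‖; positivity
    rw [Real.norm_eq_abs, abs_of_nonneg hnn]
    exact hbound y hy
  -- replace h with ht in the integrand
  have hcong : (∫ y in S, (Real.exp (-m * ‖x - y‖) * h ‖x - y‖) *
      (Real.exp (-m * ‖y‖) * h ‖y‖)) = ∫ y in S,
      (Real.exp (-m * ‖x - y‖) * ht ‖x - y‖) * (Real.exp (-m * ‖y‖) * ht ‖y‖) := by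
    refine setIntegral_congr_fun hSx fun y hy => ?_
    simp only [hht]
    rw [max_eq_left hy.1.le, max_eq_left hy.2.le]
  rw [hcong]
  calc (∫ y in S, (Real.exp (-m * ‖x - y‖) * ht ‖x - y‖) * (Real.exp (-m * ‖y‖) * ht ‖y‖))
      ≤ ∫ y in S, K * (ht ‖x - y‖ + ht ‖y‖) :=
        setIntegral_mono_on hgint hGint hSx hbound
    _ = K * ((∫ y in S, ht ‖x - y‖) + ∫ y in S, ht ‖y‖) := by
        rw [integral_const_mul, integral_add htint2 htint1]
    _ ≤ K * (I + I) := by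
        apply mul_le_mul_of_nonneg_left _ hK0.le
        have e1 : (∫ y in S, ht ‖x - y‖) ≤ I := by
          rw [← heq]
          exact setIntegral_mono_set hint'
            (Eventually.of_forall fun y => (ht_pos _).le)
            (HasSubset.Subset.eventuallyLE fun y hy => hy.1)
        have e2 : (∫ y in S, ht ‖y‖) ≤ I := by
          rw [hI]
          exact setIntegral_mono_set htint
            (Eventually.of_forall fun y => (ht_pos _).le)
            (HasSubset.Subset.eventuallyLE fun y hy => hy.2)
        linarith
    _ ≤ (2 * C * I + 1) * (Real.exp (-m * ‖x‖) * h ‖x‖) := by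
        rw [hK]
        have := hh_pos _ hxpos
        have := Real.exp_pos (-m * ‖x‖)
        nlinarith
end

section
/- Let f:(0,∞)→(0,∞) be decreasing, log-convex on (1,∞) (with a.e. derivative f'), and suppose sup_{|x|≥1} ∫_{|y|>1} exp(−(f'(|y|)/f(|y|)) (x·y)/|x|) f(|y|) dy = ∫_{|y|>1} exp(−(f'(|y|)/f(|y|)) y₁) f(|y|) dy < ∞. Then f has the direct jump property: there exists C₃>0 such that ∫_{|x−y|>1, |y|>1} f(|x−y|) f(|y|) dy ≤ C₃ f(|x|) for all |x| ≥ 1. -/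
/-!
Let `c = f'(|y|)/f(|y|) ≤ 0` and `u = x/|x|`. When `1 < |y| ≤ |x - y| < |x|`, the slope `c` of
`log f` at `|y|` is at most its secant slope on `[|x - y|, |x|]`, and Cauchy–Schwarz gives
`|x| - ⟪u, y⟫ ≤ |x - y|`; together `f(|x - y|) ≤ f(|x|) exp(-c ⟪u, y⟫)`, while for
`|x| ≤ |x - y|` monotonicity gives `f(|x - y|) ≤ f(|x|)`.
Multiplying by `f(|y|)` and swapping the roles of `y` and `x - y` otherwise, the integrand is
at most `f(|x|) (Φ(y) + Φ(x - y))`, where `Φ(y) = (exp(-c ⟪u, y⟫) + 1) f(|y|)` on `|y| > 1`.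
The reflection exchanging `u` and `e₀` shows that `∫ Φ` does not depend on `u`, and for `u = ±e₀`
the exponential integrability hypothesis makes it finite, since `exp a + exp (-a) ≥ 1`.
-/

open MeasureTheory Real Set Filter
open scoped InnerProductSpace

lemma ConvexOn.le_slope_of_hasDerivAt_of_le {S : Set ℝ} {g : ℝ → ℝ} {g' s a b : ℝ}
    (hg : ConvexOn ℝ S g) (hs : s ∈ S) (ha : a ∈ S) (hb : b ∈ S) (hsa : s ≤ a) (hab : a < b)
    (hd : HasDerivAt g g' s) : g' ≤ slope g a b := by
  refine (hg.le_slope_of_hasDerivAt hs hb (hsa.trans_lt hab) hd).trans ?_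
  rw [slope_comm, slope_comm g a]
  exact hg.slope_mono hb ⟨hs, (hsa.trans_lt hab).ne⟩ ⟨ha, hab.ne⟩ hsa

lemma HasDerivAt.nonpos_of_antitoneOn_Ici {f : ℝ → ℝ} {f' s c : ℝ} (hd : HasDerivAt f f' s)
    (hf : AntitoneOn f (Ici c)) (hs : c ≤ s) : f' ≤ 0 := by
  refine hd.hasDerivWithinAt.nonpos_of_antitoneOn ?_ hf
  refine accPt_principal_iff_nhdsWithin.2 ((inferInstance : (nhdsWithin s (Ioi s)).NeBot).mono ?_)
  exact nhdsWithin_mono _ fun r (hr : s < r) => ⟨hs.trans hr.le, hr.ne'⟩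

section LogConvex

variable {f : ℝ → ℝ} {f' a b s t : ℝ}

lemma le_mul_exp_of_logConvex (hpos : ∀ r ∈ Ici (1 : ℝ), 0 < f r)
    (hconv : ConvexOn ℝ (Ioi 1) fun r => log (f r)) (hs : 1 < s) (hsa : s ≤ a) (hab : a < b)
    (hd : HasDerivAt f f' s) : f a ≤ f b * exp (-(f' / f s) * (b - a)) := by
  have hslope := hconv.le_slope_of_hasDerivAt_of_le hs (hs.trans_le hsa)
    (hs.trans_le (hsa.trans hab.le)) hsa hab (hd.log (hpos s hs.le).ne')
  rw [slope_def_field, le_div_iff₀ (sub_pos.2 hab)] at hslope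
  rw [← exp_log (hpos a (hs.le.trans hsa)), ← exp_log (hpos b (hs.le.trans (hsa.trans hab.le))),
    ← exp_add]
  exact exp_le_exp.2 (by linarith)

lemma le_mul_exp_add_one_of_logConvex (hpos : ∀ r ∈ Ici (1 : ℝ), 0 < f r)
    (hanti : AntitoneOn f (Ici 1)) (hconv : ConvexOn ℝ (Ioi 1) fun r => log (f r))
    (hs : 1 < s) (hsa : s ≤ a) (hb : 1 ≤ b) (ht : b - t ≤ a) (hd : HasDerivAt f f' s) :
    f a ≤ f b * (exp (-(f' / f s) * t) + 1) := by
  have hfb := hpos b hb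
  rcases le_or_gt b a with hba | hab
  · have := hanti hb (hb.trans hba) hba
    nlinarith [exp_pos (-(f' / f s) * t)]
  · have hc : f' / f s ≤ 0 :=
      div_nonpos_of_nonpos_of_nonneg (hd.nonpos_of_antitoneOn_Ici hanti hs.le) (hpos s hs.le).le
    calc f a ≤ f b * exp (-(f' / f s) * (b - a)) := le_mul_exp_of_logConvex hpos hconv hs hsa hab hd
      _ ≤ f b * exp (-(f' / f s) * t) := by gcongr <;> linarith
      _ ≤ f b * (exp (-(f' / f s) * t) + 1) := by nlinarith

end LogConvex

lemma setIntegral_le_two_mul_integral_of_le_add_sub {G : Type*} [AddGroup G] [MeasurableSpace G]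
    [MeasurableAdd G] [MeasurableNeg G] {μ : Measure G} [μ.IsAddLeftInvariant] [μ.IsNegInvariant]
    {D : Set G} {g Φ : G → ℝ} {c : ℝ} (x : G) (hc : 0 ≤ c) (hΦ : Integrable Φ μ)
    (hΦ_nonneg : 0 ≤ Φ) (hg_nonneg : ∀ᵐ y ∂μ.restrict D, 0 ≤ g y)
    (hg_le : ∀ᵐ y ∂μ.restrict D, g y ≤ c * (Φ y + Φ (x - y))) :
    ∫ y in D, g y ∂μ ≤ 2 * c * ∫ y, Φ y ∂μ := by
  have hint : Integrable (fun y => c * (Φ y + Φ (x - y))) μ :=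
    (hΦ.add (hΦ.comp_sub_left x)).const_mul c
  calc ∫ y in D, g y ∂μ ≤ ∫ y in D, c * (Φ y + Φ (x - y)) ∂μ :=
        integral_mono_of_nonneg hg_nonneg hint.integrableOn hg_le
    _ ≤ ∫ y, c * (Φ y + Φ (x - y)) ∂μ :=
        setIntegral_le_integral hint (.of_forall fun y =>
          mul_nonneg hc (add_nonneg (hΦ_nonneg y) (hΦ_nonneg (x - y))))
    _ = 2 * c * ∫ y, Φ y ∂μ := by
        rw [integral_const_mul, integral_add hΦ (hΦ.comp_sub_left x),
          integral_sub_left_eq_self Φ μ x]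
        ring

section Radial

variable {E : Type*} [NormedAddCommGroup E] [NormedSpace ℝ E] [FiniteDimensional ℝ E]
  [MeasurableSpace E] [BorelSpace E] (μ : Measure E) [μ.IsAddHaarMeasure]

lemma measure_preimage_norm_eq_zero {N : Set ℝ} (hNm : MeasurableSet N) (hN : volume N = 0)
    (hN_pos : N ⊆ Ioi 0) : μ ((‖·‖) ⁻¹' N) = 0 := by
  have hR : Measure.volumeIoiPow (Module.finrank ℝ E - 1) (Subtype.val ⁻¹' N) = 0 := by
    refine withDensity_absolutelyContinuous _ _ ?_
    rw [comap_subtype_coe_apply measurableSet_Ioi]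
    exact measure_mono_null (image_preimage_subset _ _) hN
  have := μ.measurePreserving_homeomorphUnitSphereProd.measure_preimage
    (s := univ ×ˢ (Subtype.val ⁻¹' N))
    (MeasurableSet.univ.prod (hNm.preimage measurable_subtype_coe)).nullMeasurableSet
  rw [Measure.prod_prod, hR, mul_zero, comap_subtype_coe_apply (measurableSet_singleton 0).compl]
    at this
  convert this using 2
  ext y
  simp only [mem_preimage, mem_image, mem_prod, mem_univ, true_and, Subtype.exists, mem_compl_iff,
    mem_singleton_iff, homeomorphUnitSphereProd_apply_snd_coe]
  exact ⟨fun hy => ⟨y, fun h => by simpa [h] using hN_pos hy, hy, rfl⟩,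
    by rintro ⟨y, -, hy, rfl⟩; exact hy⟩

lemma ae_norm_of_ae_restrict_Ioi {P : ℝ → Prop} {c : ℝ} (hc : 0 ≤ c)
    (h : ∀ᵐ r ∂volume.restrict (Ioi c), P r) : ∀ᵐ y ∂μ, c < ‖y‖ → P ‖y‖ := by
  rw [ae_restrict_iff' measurableSet_Ioi, ae_iff] at h
  set B := {r | ¬(r ∈ Ioi c → P r)}
  have hnull := measure_preimage_norm_eq_zero μ ((measurableSet_toMeasurable volume B).inter
    measurableSet_Ioi) (measure_mono_null inter_subset_left ((measure_toMeasurable B).trans h))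
    (inter_subset_right.trans (Ioi_subset_Ioi hc))
  refine measure_mono_null (fun y hy => ?_) hnull
  have hy : c < ‖y‖ ∧ ¬P ‖y‖ := by simpa using hy
  exact ⟨subset_toMeasurable _ _ (show ‖y‖ ∈ B by simpa [B] using hy), hy.1⟩

end Radial

lemma aestronglyMeasurable_comp_norm_of_antitoneOn {E : Type*} [NormedAddCommGroup E]
    [MeasurableSpace E] [OpensMeasurableSpace E] {μ : Measure E} {f : ℝ → ℝ} {c : ℝ}
    (hf : AntitoneOn f (Ici c)) :
    AEStronglyMeasurable (fun y => f ‖y‖) (μ.restrict {y | c < ‖y‖}) := by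
  have hmono : Antitone fun r => f (max r c) := fun r s hrs =>
    hf (le_max_right r c) (le_max_right s c) (max_le_max_right c hrs)
  refine (hmono.measurable.comp measurable_norm).aestronglyMeasurable.congr ?_
  refine ae_restrict_of_forall_mem (measurableSet_lt measurable_const measurable_norm)
    fun y (hy : c < ‖y‖) => ?_
  rw [Function.comp_apply, max_eq_left hy.le]

section Tilted

variable {E : Type*} [NormedAddCommGroup E] [InnerProductSpace ℝ E]

lemma norm_sub_inner_le_norm_sub (x y : E) : ‖x‖ - ⟪‖x‖⁻¹ • x, y⟫_ℝ ≤ ‖x - y‖ := by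
  rcases eq_or_ne x 0 with rfl | hx
  · simp
  set u := ‖x‖⁻¹ • x
  have hx' : ‖x‖ ≠ 0 := norm_ne_zero_iff.2 hx
  have hux : ⟪u, x⟫_ℝ = ‖x‖ := by
    rw [real_inner_smul_left, real_inner_self_eq_norm_sq]
    field_simp
  calc ‖x‖ - ⟪u, y⟫_ℝ = ⟪u, x - y⟫_ℝ := by rw [inner_sub_right, hux]
    _ ≤ ‖u‖ * ‖x - y‖ := real_inner_le_norm _ _
    _ = ‖x - y‖ := by rw [norm_smul, norm_inv, norm_norm, inv_mul_cancel₀ hx', one_mul]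

/-- The integrand of the exponential integrability condition in the direction `u`, where `f'`
stands for the a.e. derivative of `f`. -/
noncomputable def tiltedProfile (f f' : ℝ → ℝ) (u y : E) : ℝ :=
  exp (-(f' ‖y‖ / f ‖y‖) * ⟪u, y⟫_ℝ) * f ‖y‖

noncomputable def tiltedMajorant (f f' : ℝ → ℝ) (u : E) : E → ℝ :=
  {y | 1 < ‖y‖}.indicator fun y => tiltedProfile f f' u y + f ‖y‖

variable {f f' : ℝ → ℝ}

lemma tiltedProfile_nonneg {u y : E} (hy : 0 ≤ f ‖y‖) : 0 ≤ tiltedProfile f f' u y :=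
  mul_nonneg (exp_pos _).le hy

lemma le_tiltedProfile_add_tiltedProfile_neg (u y : E) (hy : 0 ≤ f ‖y‖) :
    f ‖y‖ ≤ tiltedProfile f f' u y + tiltedProfile f f' (-u) y := by
  set a := -(f' ‖y‖ / f ‖y‖) * ⟪u, y⟫_ℝ
  have hsum : tiltedProfile f f' u y + tiltedProfile f f' (-u) y
      = (exp a + exp (-a)) * f ‖y‖ := by
    simp only [tiltedProfile, inner_neg_left, a]
    ring_nf
  rw [hsum]
  nlinarith [add_one_le_exp a, add_one_le_exp (-a)]

lemma tiltedProfile_reflection {u w : E} (h : ‖u‖ = ‖w‖) (y : E) :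
    tiltedProfile f f' w ((ℝ ∙ (u - w))ᗮ.reflection y) = tiltedProfile f f' u y := by
  set R := (ℝ ∙ (u - w))ᗮ.reflection
  have hRu : R u = w := Submodule.reflection_sub h
  simp only [tiltedProfile, ← hRu, R.inner_map_map, R.norm_map]

lemma tiltedMajorant_of_one_lt {u y : E} (hy : 1 < ‖y‖) :
    tiltedMajorant f f' u y = tiltedProfile f f' u y + f ‖y‖ :=
  indicator_of_mem (s := {y : E | 1 < ‖y‖}) hy _

lemma tiltedMajorant_nonneg (hpos : ∀ r ∈ Ici (1 : ℝ), 0 < f r) (u : E) :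
    0 ≤ tiltedMajorant f f' u := by
  refine fun y => indicator_nonneg (fun y (hy : 1 < ‖y‖) => ?_) y
  have hfy := (hpos _ hy.le).le
  exact add_nonneg (tiltedProfile_nonneg hfy) hfy

lemma mul_le_mul_tiltedProfile_add (hpos : ∀ r ∈ Ici (1 : ℝ), 0 < f r)
    (hanti : AntitoneOn f (Ici 1)) (hconv : ConvexOn ℝ (Ioi 1) fun r => log (f r)) {x y : E}
    (hx : 1 ≤ ‖x‖) (hy : 1 < ‖y‖) (hyx : ‖y‖ ≤ ‖x - y‖) (hd : HasDerivAt f (f' ‖y‖) ‖y‖) :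
    f ‖x - y‖ * f ‖y‖ ≤ f ‖x‖ * (tiltedProfile f f' (‖x‖⁻¹ • x) y + f ‖y‖) := by
  have := le_mul_exp_add_one_of_logConvex hpos hanti hconv hy hyx hx
    (norm_sub_inner_le_norm_sub x y) hd
  calc f ‖x - y‖ * f ‖y‖
      ≤ f ‖x‖ * (exp (-(f' ‖y‖ / f ‖y‖) * ⟪‖x‖⁻¹ • x, y⟫_ℝ) + 1) * f ‖y‖ :=
        mul_le_mul_of_nonneg_right this (hpos _ hy.le).le
    _ = f ‖x‖ * (tiltedProfile f f' (‖x‖⁻¹ • x) y + f ‖y‖) := by rw [tiltedProfile]; ring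

lemma mul_le_mul_tiltedMajorant_add (hpos : ∀ r ∈ Ici (1 : ℝ), 0 < f r)
    (hanti : AntitoneOn f (Ici 1)) (hconv : ConvexOn ℝ (Ioi 1) fun r => log (f r)) {x y : E}
    (hx : 1 ≤ ‖x‖) (hy : 1 < ‖y‖) (hxy : 1 < ‖x - y‖) (hdy : HasDerivAt f (f' ‖y‖) ‖y‖)
    (hdxy : HasDerivAt f (f' ‖x - y‖) ‖x - y‖) :
    f ‖x - y‖ * f ‖y‖ ≤
      f ‖x‖ * (tiltedMajorant f f' (‖x‖⁻¹ • x) y + tiltedMajorant f f' (‖x‖⁻¹ • x) (x - y)) := by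
  have hM := tiltedMajorant_nonneg (f' := f') hpos (‖x‖⁻¹ • x)
  have hfx := (hpos _ hx).le
  rcases le_total ‖y‖ ‖x - y‖ with h | h
  · have := mul_le_mul_tiltedProfile_add hpos hanti hconv hx hy h hdy
    rw [← tiltedMajorant_of_one_lt hy] at this
    exact this.trans (mul_le_mul_of_nonneg_left (le_add_of_nonneg_right (hM _)) hfx)
  · have := mul_le_mul_tiltedProfile_add hpos hanti hconv hx hxy (by rwa [sub_sub_cancel]) hdxy
    rw [sub_sub_cancel, ← tiltedMajorant_of_one_lt hxy, mul_comm] at this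
    exact this.trans (mul_le_mul_of_nonneg_left (le_add_of_nonneg_left (hM _)) hfx)

variable [FiniteDimensional ℝ E] [MeasurableSpace E] [BorelSpace E]

lemma integrableOn_tiltedProfile_of_norm_eq {u w : E} {T : Set ℝ} (h : ‖u‖ = ‖w‖)
    (hw : IntegrableOn (tiltedProfile f f' w) {y | ‖y‖ ∈ T}) :
    IntegrableOn (tiltedProfile f f' u) {y | ‖y‖ ∈ T} := by
  set R := (ℝ ∙ (u - w))ᗮ.reflection
  have := (R.measurePreserving.integrableOn_comp_preimage R.toHomeomorph.measurableEmbedding).2 hw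
  simpa [Function.comp_def, tiltedProfile_reflection h, R] using this

lemma setIntegral_tiltedProfile_of_norm_eq {u w : E} {T : Set ℝ} (h : ‖u‖ = ‖w‖) :
    ∫ y in {y | ‖y‖ ∈ T}, tiltedProfile f f' u y =
      ∫ y in {y | ‖y‖ ∈ T}, tiltedProfile f f' w y := by
  set R := (ℝ ∙ (u - w))ᗮ.reflection
  have := R.measurePreserving.setIntegral_preimage_emb R.toHomeomorph.measurableEmbedding
    (tiltedProfile f f' w) {y | ‖y‖ ∈ T}
  simpa [tiltedProfile_reflection h, R] using this

lemma integrableOn_comp_norm_of_tiltedProfile (hpos : ∀ r ∈ Ici (1 : ℝ), 0 < f r)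
    (hanti : AntitoneOn f (Ici 1)) {w : E}
    (hw : IntegrableOn (tiltedProfile f f' w) {y : E | 1 < ‖y‖}) :
    IntegrableOn (fun y => f ‖y‖) {y : E | 1 < ‖y‖} := by
  have hnw := integrableOn_tiltedProfile_of_norm_eq (T := Ioi 1) (norm_neg w) hw
  refine Integrable.mono (hw.add hnw) (aestronglyMeasurable_comp_norm_of_antitoneOn hanti)
    (ae_restrict_of_forall_mem (measurableSet_lt measurable_const measurable_norm)
      fun y (hy : 1 < ‖y‖) => ?_)
  have hfy := (hpos _ hy.le).le
  rw [Real.norm_of_nonneg hfy]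
  exact (le_tiltedProfile_add_tiltedProfile_neg w y hfy).trans (le_abs_self _)

lemma integrable_tiltedMajorant_of_norm_eq (hpos : ∀ r ∈ Ici (1 : ℝ), 0 < f r)
    (hanti : AntitoneOn f (Ici 1)) {u w : E} (h : ‖u‖ = ‖w‖)
    (hw : IntegrableOn (tiltedProfile f f' w) {y : E | 1 < ‖y‖}) :
    Integrable (tiltedMajorant f f' u) :=
  ((integrableOn_tiltedProfile_of_norm_eq h hw).add
    (integrableOn_comp_norm_of_tiltedProfile hpos hanti hw)).integrable_indicator
    (measurableSet_lt measurable_const measurable_norm)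

lemma integral_tiltedMajorant_of_norm_eq (hpos : ∀ r ∈ Ici (1 : ℝ), 0 < f r)
    (hanti : AntitoneOn f (Ici 1)) {u w : E} (h : ‖u‖ = ‖w‖)
    (hw : IntegrableOn (tiltedProfile f f' w) {y : E | 1 < ‖y‖}) :
    ∫ y, tiltedMajorant f f' u y = ∫ y, tiltedMajorant f f' w y := by
  have hS : MeasurableSet {y : E | 1 < ‖y‖} := measurableSet_lt measurable_const measurable_norm
  have hf := integrableOn_comp_norm_of_tiltedProfile hpos hanti hw
  have hu : IntegrableOn (tiltedProfile f f' u) {y : E | 1 < ‖y‖} :=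
    integrableOn_tiltedProfile_of_norm_eq (T := Ioi 1) h hw
  rw [tiltedMajorant, tiltedMajorant, integral_indicator hS, integral_indicator hS,
    integral_add hu hf, integral_add hw hf]
  exact congrArg (· + _) (setIntegral_tiltedProfile_of_norm_eq (T := Ioi 1) h)

lemma setIntegral_mul_le_two_mul_integral_tiltedMajorant (hpos : ∀ r ∈ Ici (1 : ℝ), 0 < f r)
    (hanti : AntitoneOn f (Ici 1)) (hconv : ConvexOn ℝ (Ioi 1) fun r => log (f r))
    (hderiv : ∀ᵐ r ∂volume.restrict (Ioi 1), HasDerivAt f (f' r) r) {x : E} (hx : 1 ≤ ‖x‖)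
    (hM : Integrable (tiltedMajorant f f' (‖x‖⁻¹ • x))) :
    ∫ y in {y : E | 1 < ‖x - y‖ ∧ 1 < ‖y‖}, f ‖x - y‖ * f ‖y‖ ≤
      2 * f ‖x‖ * ∫ y, tiltedMajorant f f' (‖x‖⁻¹ • x) y := by
  have hdy := ae_norm_of_ae_restrict_Ioi (volume : Measure E) zero_le_one hderiv
  have hdxy := (Measure.measurePreserving_sub_left volume x).quasiMeasurePreserving.ae hdy
  have hD : MeasurableSet {y : E | 1 < ‖x - y‖ ∧ 1 < ‖y‖} :=
    (measurableSet_lt measurable_const (measurable_const.sub measurable_id).norm).inter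
      (measurableSet_lt measurable_const measurable_norm)
  refine setIntegral_le_two_mul_integral_of_le_add_sub x (hpos _ hx).le hM
    (tiltedMajorant_nonneg hpos _) ?_ ?_
  · filter_upwards [ae_restrict_mem hD] with y ⟨hxy, hy⟩
    exact mul_nonneg (hpos _ hxy.le).le (hpos _ hy.le).le
  · filter_upwards [ae_restrict_mem hD, ae_restrict_of_ae hdy, ae_restrict_of_ae hdxy]
      with y ⟨hxy, hy⟩ hdy hdxy
    exact mul_le_mul_tiltedMajorant_add hpos hanti hconv hx hy hxy (hdy hy) (hdxy hxy)

end Tilted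

theorem stmt_4_general {d : ℕ} (hd : 0 < d) (f f' : ℝ → ℝ)
    (hf_pos : ∀ r : ℝ, 0 < r → 0 < f r)
    (hf_dec : ∀ r s : ℝ, 0 < r → r ≤ s → f s ≤ f r)
    (hderiv : ∀ᵐ r ∂(volume.restrict (Set.Ioi (1:ℝ))), HasDerivAt f (f' r) r)
    (hlogconv : ConvexOn ℝ (Set.Ioi (1:ℝ)) (fun r => Real.log (f r)))
    (hint : IntegrableOn
      (fun y : EuclideanSpace ℝ (Fin d) =>
        Real.exp (-(f' ‖y‖ / f ‖y‖) * y ⟨0, hd⟩) * f ‖y‖)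
      {y : EuclideanSpace ℝ (Fin d) | 1 < ‖y‖}) :
    ∃ C₃ > (0:ℝ), ∀ x : EuclideanSpace ℝ (Fin d), 1 ≤ ‖x‖ →
      (∫ y in {y : EuclideanSpace ℝ (Fin d) | 1 < ‖x - y‖ ∧ 1 < ‖y‖},
        f ‖x - y‖ * f ‖y‖) ≤ C₃ * f ‖x‖ := by
  set e₀ := EuclideanSpace.single (⟨0, hd⟩ : Fin d) (1 : ℝ)
  have hpos : ∀ r ∈ Ici (1 : ℝ), 0 < f r := fun r hr => hf_pos r (one_pos.trans_le hr)
  have hanti : AntitoneOn f (Ici 1) := fun r hr s _ hrs => hf_dec r s (one_pos.trans_le hr) hrs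
  have he₀ : IntegrableOn (tiltedProfile f f' e₀) {y | 1 < ‖y‖} := by
    convert hint using 2 with y
    simp [tiltedProfile, e₀, EuclideanSpace.inner_single_left]
  have hC : 0 ≤ ∫ y, tiltedMajorant f f' e₀ y := integral_nonneg (tiltedMajorant_nonneg hpos e₀)
  refine ⟨2 * (∫ y, tiltedMajorant f f' e₀ y) + 1, by linarith, fun x hx => ?_⟩
  have hx₀ : ‖‖x‖⁻¹ • x‖ = ‖e₀‖ := by
    rw [PiLp.norm_single, norm_one, norm_smul, norm_inv, norm_norm,
      inv_mul_cancel₀ (one_pos.trans_le hx).ne']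
  calc _ ≤ 2 * f ‖x‖ * ∫ y, tiltedMajorant f f' (‖x‖⁻¹ • x) y :=
        setIntegral_mul_le_two_mul_integral_tiltedMajorant hpos hanti hlogconv hderiv hx
          (integrable_tiltedMajorant_of_norm_eq hpos hanti hx₀ he₀)
    _ = 2 * f ‖x‖ * ∫ y, tiltedMajorant f f' e₀ y := by
        rw [integral_tiltedMajorant_of_norm_eq hpos hanti hx₀ he₀]
    _ ≤ (2 * (∫ y, tiltedMajorant f f' e₀ y) + 1) * f ‖x‖ := by
        nlinarith [hf_pos _ (one_pos.trans_le hx)]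

/-- log-convex profiles satisfying the exponential integrability
condition have the direct jump property. -/
theorem stmt_4 {d : ℕ} (hd : 0 < d) (f f' : ℝ → ℝ)
    (hf_pos : ∀ r : ℝ, 0 < r → 0 < f r)
    (hf_dec : ∀ r s : ℝ, 0 < r → r ≤ s → f s ≤ f r)
    (hderiv : ∀ᵐ r ∂(volume.restrict (Set.Ioi (1:ℝ))), HasDerivAt f (f' r) r)
    (hlogconv : ConvexOn ℝ (Set.Ioi (1:ℝ)) (fun r => Real.log (f r)))
    (hint : IntegrableOn
      (fun y : EuclideanSpace ℝ (Fin d) =>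
        Real.exp (-(f' ‖y‖ / f ‖y‖) * y ⟨0, hd⟩) * f ‖y‖)
      {y : EuclideanSpace ℝ (Fin d) | 1 < ‖y‖})
    (hsup : ∀ x : EuclideanSpace ℝ (Fin d), 1 ≤ ‖x‖ →
      (∫ y in {y : EuclideanSpace ℝ (Fin d) | 1 < ‖y‖},
        Real.exp (-(f' ‖y‖ / f ‖y‖) * ((inner ℝ x y : ℝ) / ‖x‖)) * f ‖y‖)
      ≤ ∫ y in {y : EuclideanSpace ℝ (Fin d) | 1 < ‖y‖},
        Real.exp (-(f' ‖y‖ / f ‖y‖) * y ⟨0, hd⟩) * f ‖y‖) :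
    ∃ C₃ > (0:ℝ), ∀ x : EuclideanSpace ℝ (Fin d), 1 ≤ ‖x‖ →
      (∫ y in {y : EuclideanSpace ℝ (Fin d) | 1 < ‖x - y‖ ∧ 1 < ‖y‖},
        f ‖x - y‖ * f ‖y‖) ≤ C₃ * f ‖x‖ :=
  stmt_4_general hd f f' hf_pos hf_dec hderiv hlogconv hint
end
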